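/- For each fixed x ∈ ℝ and λ ∈ ℝ, the function α ↦ α·Ψ(x, λ/α) is non-decreasing on (0, ∞). Consequently the dual function g(λ, α) = inf_θ L(θ, λ, α) is non-decreasing in α. -/
import Mathlib


open scoped BigOperators

noncomputable def Psi (x y : ℝ) : ℝ := ((max 0 (2 * x + y)) ^ 2 - y ^ 2) / 4

lemma psi_key (x lam γ ν : ℝ) (hγ : 0 < γ) (hν : 0 ≤ ν) :
    ν * x - (ν - lam) ^ 2 / (4 * γ) ≤ γ * Psi x (lam / γ) := by
  unfold Psi
  have hrw : 2 * x + lam / γ = (2 * γ * x + lam) / γ := by field_simp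
  rcases le_or_gt (2 * γ * x + lam) 0 with h | h
  · have h2 : 2 * x + lam / γ ≤ 0 := by
      rw [hrw]; exact div_nonpos_of_nonpos_of_nonneg h hγ.le
    rw [max_eq_left h2]
    have e1 : γ * ((0 ^ 2 - (lam / γ) ^ 2) / 4) = -(lam ^ 2) / (4 * γ) := by
      field_simp; ring
    rw [e1, sub_le_iff_le_add, ← add_div, le_div_iff₀ (by positivity)]
    nlinarith [mul_nonneg hν (neg_nonneg.2 h), sq_nonneg ν]
  · have h2 : 0 ≤ 2 * x + lam / γ := by
      rw [hrw]; exact (div_pos h hγ).le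
    rw [max_eq_right h2]
    have e2 : γ * (((2 * x + lam / γ) ^ 2 - (lam / γ) ^ 2) / 4) = γ * x ^ 2 + x * lam := by
      field_simp; ring
    rw [e2, sub_le_iff_le_add, ← sub_le_iff_le_add', le_div_iff₀ (by positivity)]
    nlinarith [sq_nonneg (2 * γ * x + lam - ν)]

lemma psi_eq (x lam α : ℝ) (hα : 0 < α) :
    α * Psi x (lam / α) =
      (max 0 (2 * α * x + lam)) * x - ((max 0 (2 * α * x + lam)) - lam) ^ 2 / (4 * α) := by
  unfold Psi
  have hrw : 2 * x + lam / α = (2 * α * x + lam) / α := by field_simp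
  rcases le_or_gt (2 * α * x + lam) 0 with h | h
  · have h2 : 2 * x + lam / α ≤ 0 := by
      rw [hrw]; exact div_nonpos_of_nonpos_of_nonneg h hα.le
    rw [max_eq_left h2, max_eq_left h]
    field_simp
    ring
  · have h2 : 0 ≤ 2 * x + lam / α := by
      rw [hrw]; exact (div_pos h hα).le
    rw [max_eq_right h2, max_eq_right h.le]
    field_simp
    ring

lemma psi_mono (x lam α β : ℝ) (hα : 0 < α) (hab : α ≤ β) :
    α * Psi x (lam / α) ≤ β * Psi x (lam / β) := by
  have hβ : 0 < β := lt_of_lt_of_le hα hab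
  set ν := max 0 (2 * α * x + lam) with hν
  have hν0 : 0 ≤ ν := le_max_left _ _
  rw [psi_eq x lam α hα]
  refine le_trans ?_ (psi_key x lam β ν hβ hν0)
  have : (ν - lam) ^ 2 / (4 * β) ≤ (ν - lam) ^ 2 / (4 * α) :=
    div_le_div_of_nonneg_left (sq_nonneg _) (by positivity) (by linarith)
  linarith

theorem monotone_in_alpha {Θ : Type*} {m : ℕ} (ℓ₀ : Θ → ℝ) (ℓ : Fin m → Θ → ℝ) :
    (∀ x lam : ℝ, ∀ α β : ℝ, 0 < α → α ≤ β →
        α * Psi x (lam / α) ≤ β * Psi x (lam / β)) ∧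
      ∀ (lam : Fin m → ℝ) (α β : ℝ), 0 < α → α ≤ β →
        (⨅ θ : Θ, ((ℓ₀ θ + α * ∑ i, Psi (ℓ i θ) (lam i / α) : ℝ) : EReal))
          ≤ ⨅ θ : Θ, ((ℓ₀ θ + β * ∑ i, Psi (ℓ i θ) (lam i / β) : ℝ) : EReal) := by
  constructor
  · exact fun x lam α β hα hab => psi_mono x lam α β hα hab
  · intro lam α β hα hab
    refine iInf_mono fun θ => ?_
    rw [EReal.coe_le_coe_iff]
    have hsum : α * ∑ i, Psi (ℓ i θ) (lam i / α) ≤ β * ∑ i, Psi (ℓ i θ) (lam i / β) := by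
      rw [Finset.mul_sum, Finset.mul_sum]
      exact Finset.sum_le_sum fun i _ => psi_mono (ℓ i θ) (lam i) α β hα hab
    linarith
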